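/- arXiv:0706.0566 — 2 statements merged into one kernel-verified Lean document; each statement's English description precedes it below -/
import Mathlib

section
/- Let p be a prime with p ≡ 1 (mod 13) and p > 169. Let P(x) ∈ ℤ[x] be a monic polynomial of degree 4 all of whose complex roots have absolute value √p, and suppose its coefficient b of x² satisfies b ≡ 6 (mod 13). Then p does not divide b. (In particular |b| ≤ 6p, and |b| = 6p is impossible.) -/
/-!
Write `b = p * c`. Each of the six pairwise products of the roots has absolute value `p`, so
`|c| ≤ 6`; since `p ≡ 1 (mod 13)`, also `c ≡ b ≡ 6 (mod 13)`, which forces `c = 6`. But `b = 6p`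
is the equality case of the triangle inequality: every pairwise product is then exactly `p`, so
all four roots equal a single `z` with `z² = p`. The `x³`-coefficient `-4z` is then an integer
whose square is `16p`, impossible for a prime `p`.
-/

open Polynomial Multiset

lemma Complex.eq_ofReal_of_norm_le_of_re_eq {w : ℂ} {r : ℝ} (hnorm : ‖w‖ ≤ r)
    (hre : w.re = r) : w = r := by
  have him : w.im = 0 :=
    abs_re_eq_norm.1 (le_antisymm (abs_re_le_norm w) (hnorm.trans (hre ▸ le_abs_self w.re)))
  exact Complex.ext hre (by simpa using him)

lemma Multiset.eq_of_norm_le_of_sum_eq_card_mul {m : Multiset ℂ} {r : ℝ}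
    (hle : ∀ w ∈ m, ‖w‖ ≤ r) (hsum : m.sum = card m * r) {w : ℂ} (hw : w ∈ m) : w = r := by
  obtain ⟨m', rfl⟩ := exists_cons_of_mem hw
  have hrest : ‖m'.sum‖ ≤ card m' * r := by
    refine (norm_multiset_sum_le m').trans ?_
    simpa using sum_le_card_nsmul (m'.map norm) r
      (by simpa using fun x hx => hle x (mem_cons_of_mem hx))
  have hsum_re : w.re + m'.sum.re = (card m' + 1) * r := by
    simpa using congrArg Complex.re hsum
  refine Complex.eq_ofReal_of_norm_le_of_re_eq (hle w (mem_cons_self w m')) ?_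
  linarith [Complex.re_le_norm m'.sum, Complex.re_le_norm w, hle w (mem_cons_self w m')]

section EqualNorms

variable {s : Multiset ℂ} {ρ : ℝ}

lemma Multiset.norm_prod_of_mem_powersetCard (hs : ∀ z ∈ s, ‖z‖ = ρ) {k : ℕ} {t : Multiset ℂ}
    (ht : t ∈ powersetCard k s) : ‖t.prod‖ = ρ ^ k := by
  obtain ⟨hts, rfl⟩ := mem_powersetCard.1 ht
  have hmap : t.map norm = replicate (card t) ρ :=
    eq_replicate.2 ⟨card_map _ _, by simpa using fun z hz => hs z (mem_of_le hts hz)⟩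
  simpa [hmap] using map_multiset_prod (normHom : ℂ →*₀ ℝ) t

lemma Multiset.norm_esymm_le (hs : ∀ z ∈ s, ‖z‖ = ρ) (k : ℕ) :
    ‖s.esymm k‖ ≤ (card s).choose k * ρ ^ k := by
  rw [esymm]
  refine (norm_multiset_sum_le _).trans ?_
  simpa using sum_le_card_nsmul _ (ρ ^ k)
    (forall_mem_map_iff.2 fun t ht => (norm_prod_of_mem_powersetCard hs ht).le)

lemma Multiset.prod_eq_of_esymm_eq (hs : ∀ z ∈ s, ‖z‖ = ρ) {k : ℕ}
    (he : s.esymm k = (card s).choose k * ρ ^ k) {t : Multiset ℂ} (ht : t ∈ powersetCard k s) :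
    t.prod = (ρ ^ k : ℝ) := by
  refine eq_of_norm_le_of_sum_eq_card_mul (m := (powersetCard k s).map prod) ?_ ?_
    (mem_map_of_mem _ ht)
  · exact forall_mem_map_iff.2 fun t ht => (norm_prod_of_mem_powersetCard hs ht).le
  · simpa [esymm] using he

end EqualNorms

lemma Multiset.exists_eq_replicate_of_prod_eq {M : Type*} [CommMonoidWithZero M]
    [IsCancelMulZero M] {s : Multiset M} {c : M} (hc : c ≠ 0) (hs : 3 ≤ card s)
    (h : ∀ t ∈ powersetCard 2 s, t.prod = c) : ∃ z, z ^ 2 = c ∧ s = replicate (card s) z := by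
  classical
  have hpair : ∀ x ∈ s, ∀ y ∈ s.erase x, x * y = c := fun x hx y hy => by
    have hle : {x, y} ≤ s := cons_erase hx ▸ cons_le_cons x (singleton_le.2 hy)
    simpa using h {x, y} (mem_powersetCard.2 ⟨hle, rfl⟩)
  have hall : ∀ x ∈ s, ∀ y ∈ s, x = y := by
    intro x hx y hy
    by_contra hxy
    have hy' : y ∈ s.erase x := (mem_erase_of_ne (Ne.symm hxy)).2 hy
    obtain ⟨w, hw⟩ : ∃ w, w ∈ (s.erase x).erase y :=
      card_pos_iff_exists_mem.1 (by
        rw [card_erase_of_mem hy', card_erase_of_mem hx, Nat.pred_eq_sub_one, Nat.pred_eq_sub_one]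
        omega)
    have hxw := hpair x hx w (mem_of_mem_erase hw)
    have hyw := hpair y hy w (mem_of_mem_erase (erase_comm s x y ▸ hw))
    have hw0 : w ≠ 0 := by rintro rfl; exact hc (by simpa using hxw.symm)
    exact hxy (mul_right_cancel₀ hw0 (hxw.trans hyw.symm))
  obtain ⟨x, hx⟩ := card_pos_iff_exists_mem.1 (by omega : 0 < card s)
  obtain ⟨y, hy⟩ := card_pos_iff_exists_mem.1 (by
    rw [card_erase_of_mem hx, Nat.pred_eq_sub_one]; omega : 0 < card (s.erase x))
  refine ⟨x, ?_, eq_replicate_card.2 fun b hb => hall b hb x hx⟩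
  rw [sq, ← hpair x hx y hy, hall y (mem_of_mem_erase hy) x hx]

lemma Int.sq_ne_sq_mul_of_prime {q : ℤ} (hq : Prime q) {m : ℤ} (hm : m ≠ 0) (a : ℤ) :
    a ^ 2 ≠ m ^ 2 * q := by
  intro h
  obtain ⟨b, rfl⟩ : m ∣ a := (Int.pow_dvd_pow_iff two_ne_zero).1 ⟨q, h⟩
  refine hq.not_isSquare ⟨b, mul_left_cancel₀ (pow_ne_zero 2 hm) ?_⟩
  rw [← h]; ring

lemma Int.eq_six_of_mul_modEq_of_abs_le {c p : ℤ} (hp : p ≡ 1 [ZMOD 13])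
    (hcp : p * c ≡ 6 [ZMOD 13]) (hc : |c| ≤ 6) : c = 6 := by
  have hc13 : c ≡ 6 [ZMOD 13] := by simpa using (hp.mul_right c).symm.trans hcp
  rw [abs_le] at hc
  unfold Int.ModEq at hc13
  omega

lemma Polynomial.Monic.algebraMap_coeff_eq_esymm_aroots {R K : Type*} [CommRing R] [Field K]
    [IsAlgClosed K] [Algebra R K] [FaithfulSMul R K] {P : R[X]} (hP : P.Monic) {k : ℕ}
    (hk : k ≤ P.natDegree) :
    algebraMap R K (P.coeff k) =
      (-1) ^ (P.natDegree - k) * (P.aroots K).esymm (P.natDegree - k) := by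
  rw [← coeff_map, coeff_eq_esymm_roots_of_card IsAlgClosed.card_roots_eq_natDegree
    (by rwa [hP.natDegree_map]), (hP.map _).leadingCoeff, one_mul, hP.natDegree_map]

theorem stmt_11_general (p : ℕ) (hp : p.Prime) (hmod : p % 13 = 1)
    (P : Polynomial ℤ) (hmon : P.Monic) (hdeg : P.natDegree = 4)
    (hroots : ∀ z : ℂ, Polynomial.aeval z P = 0 → ‖z‖ = Real.sqrt p)
    (hb : P.coeff 2 ≡ 6 [ZMOD 13]) :
    ¬ (p : ℤ) ∣ P.coeff 2 := by
  rintro ⟨c, hc⟩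
  set s := P.aroots ℂ
  have hcard : card s = 4 := IsAlgClosed.card_aroots_eq_natDegree.trans hdeg
  have hnorm : ∀ z ∈ s, ‖z‖ = √p := fun z hz => hroots z (mem_aroots.1 hz).2
  have he2 : (P.coeff 2 : ℂ) = s.esymm 2 := by
    simpa [hdeg] using hmon.algebraMap_coeff_eq_esymm_aroots (K := ℂ) (k := 2) (by omega)
  have hsqrt : (√p : ℝ) ^ 2 = p := Real.sq_sqrt p.cast_nonneg
  have hc6 : c = 6 := by
    refine Int.eq_six_of_mul_modEq_of_abs_le ?_ (hc ▸ hb) ?_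
    · unfold Int.ModEq; omega
    · have hle := norm_esymm_le hnorm 2
      rw [← he2, hcard, hc, hsqrt] at hle
      have : (p : ℝ) * |c| ≤ p * 6 := by simpa [mul_comm, Nat.choose] using hle
      exact_mod_cast le_of_mul_le_mul_left this (by exact_mod_cast hp.pos)
  have hpair : ∀ t ∈ powersetCard 2 s, t.prod = p := fun t ht => by
    have he : s.esymm 2 = (card s).choose 2 * (√p : ℝ) ^ 2 := by
      rw [← he2, hcard, hc, hc6, ← Complex.ofReal_pow, hsqrt]; push_cast [Nat.choose]; ring
    rw [prod_eq_of_esymm_eq hnorm he ht, hsqrt, Complex.ofReal_natCast]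
  obtain ⟨z, hz, hsz⟩ :=
    exists_eq_replicate_of_prod_eq (by exact_mod_cast hp.ne_zero) (by omega) hpair
  have he1 : (P.coeff 3 : ℂ) = -(4 * z) := by
    have := hmon.algebraMap_coeff_eq_esymm_aroots (K := ℂ) (k := 3) (by omega)
    rw [hdeg, show P.aroots ℂ = s from rfl, hsz, hcard] at this
    simp [esymm, powersetCard_one] at this
    linear_combination this
  refine Int.sq_ne_sq_mul_of_prime (Nat.prime_iff_prime_int.1 hp) (m := 4) four_ne_zero
    (P.coeff 3) ?_
  exact_mod_cast (show (P.coeff 3 : ℂ) ^ 2 = 4 ^ 2 * p by rw [he1, ← hz]; ring)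

theorem stmt_11 (p : ℕ) (hp : p.Prime) (hmod : p % 13 = 1) (hbig : 169 < p)
    (P : Polynomial ℤ) (hmon : P.Monic) (hdeg : P.natDegree = 4)
    (hroots : ∀ z : ℂ, Polynomial.aeval z P = 0 → ‖z‖ = Real.sqrt p)
    (hb : P.coeff 2 ≡ 6 [ZMOD 13]) :
    ¬ (p : ℤ) ∣ P.coeff 2 :=
  stmt_11_general p hp hmod P hmon hdeg hroots hb
end

section
/- Let p be a prime and (a_n)_{n≥1} a sequence in ℤ_p with p ∤ a_p. Suppose u ∈ ℤ_p is such that (up)² − a_p(up) + p = 0, so that u·a_p ≡ 1 (mod p). Define f^{(−1)}(q) := Σ_{gcd(n,p)=1} (a_n/n) q^n ∈ ℤ_p[[q]] and f^{(−1)}_{[u]}(q) := Σ_{i≥0} Σ_{gcd(n,p)=1} u^i (a_n/n) q^{n p^i} ∈ ℤ_p[[q]]. Then, denoting reductions modulo p by bars, the identity −(f̄^{(−1)}_{[u]}(q))^p + ā_p · f̄^{(−1)}_{[u]}(q) = ā_p · f̄^{(−1)}(q) holds in 𝔽_p[[q]]. -/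
/-!
Every `m ≥ 1` is uniquely `n p^i` with `p ∤ n`, so `F := f^{(-1)}_{[u]}` satisfies
`F = f^{(-1)} + u · F(q^p)`. Modulo `p` the Frobenius gives `F̄(q^p) = F̄^p`, hence
`F̄ = f̄^{(-1)} + ū F̄^p`; multiplying by `ā_p` and using `ā_p ū = 1` (the quadratic for `up`,
divided by `p` and reduced) yields the identity.
-/

/-- `f^{(-1)}(q) = Σ_{gcd(n,p)=1} (a_n/n) q^n`, where `b n = a_n / n`. -/
noncomputable def fMinusOne (p : ℕ) [Fact p.Prime] (b : ℕ → ℤ_[p]) : PowerSeries ℤ_[p] :=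
  PowerSeries.mk fun n => if p ∣ n then 0 else b n

/-- `f^{(-1)}_{[u]}(q) = Σ_{i ≥ 0} Σ_{gcd(n,p)=1} u^i (a_n/n) q^{n p^i}`:
the coefficient of `q^m` (for `m ≥ 1`, `m = n p^i` with `p ∤ n`) is `u^i (a_n/n)`. -/
noncomputable def fMinusOneU (p : ℕ) [Fact p.Prime] (b : ℕ → ℤ_[p]) (u : ℤ_[p]) :
    PowerSeries ℤ_[p] :=
  PowerSeries.mk fun m =>
    if m = 0 then 0 else u ^ (m.factorization p) * b (m / p ^ (m.factorization p))

theorem PowerSeries.pow_card_eq_expand {p : ℕ} [Fact p.Prime] (F : PowerSeries (ZMod p)) :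
    F ^ p = expand p (Fact.out : p.Prime).ne_zero F := by
  ext n
  -- the `n`-th coefficient only sees `trunc (n + 1) F`, where `ZMod.expand_card` applies
  rw [coeff_expand, ← coeff_coe_trunc_of_lt n.lt_succ_self, ← trunc_trunc_pow,
    coeff_coe_trunc_of_lt n.lt_succ_self, ← Polynomial.coe_pow, ← ZMod.expand_card,
    Polynomial.coeff_coe, Polynomial.coeff_expand (Fact.out : p.Prime).pos]
  split_ifs
  · rw [coeff_trunc, if_pos (Nat.lt_succ_of_le (Nat.div_le_self n p))]
  · rfl

theorem PadicInt.toZMod_mul_eq_one_of_eq_zero {p : ℕ} [Fact p.Prime] {a u : ℤ_[p]}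
    (hu : (u * p) ^ 2 - a * (u * p) + p = 0) : toZMod a * toZMod u = 1 := by
  have hp : (p : ℤ_[p]) ≠ 0 := Nat.cast_ne_zero.mpr (Fact.out : p.Prime).ne_zero
  have hdiv : (p : ℤ_[p]) * (u ^ 2 * p - a * u + 1) = 0 := by linear_combination hu
  have hu' := congrArg toZMod ((mul_eq_zero.mp hdiv).resolve_left hp)
  simp only [map_add, map_sub, map_mul, map_pow, map_one, map_zero, map_natCast,
    ZMod.natCast_self] at hu'
  linear_combination -hu'

section

open PowerSeries

variable {p : ℕ} [Fact p.Prime] (b : ℕ → ℤ_[p]) (u : ℤ_[p])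

theorem coeff_fMinusOneU_of_not_dvd {m : ℕ} (hm : ¬ p ∣ m) :
    coeff m (fMinusOneU p b u) = coeff m (fMinusOne p b) := by
  have hm0 : m ≠ 0 := by rintro rfl; exact hm (dvd_zero p)
  simp [fMinusOneU, fMinusOne, hm, hm0, Nat.factorization_eq_zero_of_not_dvd hm]

theorem coeff_fMinusOneU_prime_mul (k : ℕ) :
    coeff (p * k) (fMinusOneU p b u) = u * coeff k (fMinusOneU p b u) := by
  have hp : p.Prime := Fact.out
  rcases eq_or_ne k 0 with rfl | hk
  · simp [fMinusOneU]
  have hval : (p * k).factorization p = k.factorization p + 1 := by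
    rw [Nat.factorization_mul hp.ne_zero hk, Finsupp.add_apply, hp.factorization_self, add_comm]
  have hquot : p * k / p ^ (k.factorization p + 1) = k / p ^ k.factorization p := by
    rw [pow_succ', Nat.mul_div_mul_left _ _ hp.pos]
  simp only [fMinusOneU, coeff_mk, mul_eq_zero, hp.ne_zero, hk, or_self, if_false]
  rw [hval, hquot, pow_succ', mul_assoc]

theorem coeff_fMinusOne_prime_mul (k : ℕ) : coeff (p * k) (fMinusOne p b) = 0 := by
  simp [fMinusOne]

theorem fMinusOneU_eq_add_expand :
    fMinusOneU p b u = fMinusOne p b + C u * expand p (Fact.out : p.Prime).ne_zero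
      (fMinusOneU p b u) := by
  ext m
  rw [map_add, coeff_C_mul, coeff_expand]
  split_ifs with hm
  · obtain ⟨k, rfl⟩ := hm
    rw [coeff_fMinusOneU_prime_mul, coeff_fMinusOne_prime_mul,
      Nat.mul_div_cancel_left _ (Fact.out : p.Prime).pos, zero_add]
  · rw [coeff_fMinusOneU_of_not_dvd b u hm, mul_zero, add_zero]

end

theorem stmt_14_general (p : ℕ) [Fact p.Prime] (a : ℕ → ℤ_[p])
    (u : ℤ_[p]) (hu : (u * p) ^ 2 - a p * (u * p) + p = 0)
    (b : ℕ → ℤ_[p]) :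
    - (PowerSeries.map PadicInt.toZMod (fMinusOneU p b u)) ^ p
      + PowerSeries.C (PadicInt.toZMod (a p)) *
          PowerSeries.map PadicInt.toZMod (fMinusOneU p b u)
      = PowerSeries.C (PadicInt.toZMod (a p)) *
          PowerSeries.map PadicInt.toZMod (fMinusOne p b) := by
  have hF : PowerSeries.map PadicInt.toZMod (fMinusOneU p b u)
      = PowerSeries.map PadicInt.toZMod (fMinusOne p b) + PowerSeries.C (PadicInt.toZMod u)
        * PowerSeries.map PadicInt.toZMod (fMinusOneU p b u) ^ p := by
    conv_lhs => rw [fMinusOneU_eq_add_expand]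
    rw [map_add, map_mul, PowerSeries.map_C, PowerSeries.map_expand,
      ← PowerSeries.pow_card_eq_expand]
  have hunit :
      PowerSeries.C (PadicInt.toZMod (a p)) * PowerSeries.C (PadicInt.toZMod u) = 1 := by
    rw [← map_mul, PadicInt.toZMod_mul_eq_one_of_eq_zero hu, map_one]
  linear_combination PowerSeries.C (PadicInt.toZMod (a p)) * hF
    + PowerSeries.map PadicInt.toZMod (fMinusOneU p b u) ^ p * hunit

theorem stmt_14 (p : ℕ) [Fact p.Prime] (a : ℕ → ℤ_[p])
    (hap : ¬ (p : ℤ_[p]) ∣ a p)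
    (u : ℤ_[p]) (hu : (u * p) ^ 2 - a p * (u * p) + p = 0)
    (b : ℕ → ℤ_[p]) (hb : ∀ n : ℕ, ¬ p ∣ n → (n : ℤ_[p]) * b n = a n) :
    - (PowerSeries.map PadicInt.toZMod (fMinusOneU p b u)) ^ p
      + PowerSeries.C (PadicInt.toZMod (a p)) *
          PowerSeries.map PadicInt.toZMod (fMinusOneU p b u)
      = PowerSeries.C (PadicInt.toZMod (a p)) *
          PowerSeries.map PadicInt.toZMod (fMinusOne p b) :=
  stmt_14_general p a u hu b
end
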